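/- arXiv:2012.02275 — 2 statements merged into one kernel-verified Lean document; each statement's English description precedes it below -/
import Mathlib

section
/- Under the setup of the previous statements, if g' is nonnegative everywhere and the aligned strength is non-positive (γ_s ≤ 0, i.e., the features in s are not aligned with the output), then Δ_s ≤ -δ · g'(δ·Σ_j |w_j| - c·⟨z, w⟩) ≤ 0, so the shrinkage of attributions over s is at least δ times the loss derivative. -/
/-! Since `w i * sign (w i) = |w i|`, the numerator of `Δ_s` is `g'(·) · (c ⟨z, w⟩_s - δ ∑_s |w i|)`,
so `Δ_s = g'(·) · (γ_s - δ)`. With `g' ≥ 0` and `γ_s ≤ 0` this is at most `-δ g'(·) ≤ 0`. -/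

theorem Real.self_mul_sign (x : ℝ) : x * Real.sign x = |x| := by
  rcases lt_trichotomy x 0 with h | rfl | h
  · rw [Real.sign_of_neg h, abs_of_neg h, mul_neg_one]
  · simp
  · rw [Real.sign_of_pos h, abs_of_pos h, mul_one]

theorem Finset.sum_mul_mul_sub_mul_sign {ι : Type*} (s : Finset ι) (w z : ι → ℝ) (D c δ : ℝ) :
    ∑ i ∈ s, w i * (D * (c * z i - δ * Real.sign (w i)))
      = D * (c * ∑ i ∈ s, w i * z i - δ * ∑ i ∈ s, |w i|) := by
  simp_rw [Finset.mul_sum, ← Finset.sum_sub_distrib, Finset.mul_sum]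
  refine Finset.sum_congr rfl fun i _ => ?_
  rw [← Real.self_mul_sign]
  ring

theorem Finset.sum_mul_mul_sub_mul_sign_div {ι : Type*} (s : Finset ι) (w z : ι → ℝ) (D c δ : ℝ)
    (hs : ∑ i ∈ s, |w i| ≠ 0) :
    (∑ i ∈ s, w i * (D * (c * z i - δ * Real.sign (w i)))) / ∑ i ∈ s, |w i|
      = D * (c * (∑ i ∈ s, w i * z i) / ∑ i ∈ s, |w i| - δ) := by
  rw [Finset.sum_mul_mul_sub_mul_sign]
  field_simp

theorem concentration_change_strong_shrinkage_general (n : ℕ) (g : ℝ → ℝ)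
    (hg' : ∀ t : ℝ, 0 ≤ deriv g t)
    (z w : Fin n → ℝ) (c δ : ℝ) (hδ : 0 ≤ δ)
    (s : Finset (Fin n)) (hs : 0 < ∑ i ∈ s, |w i|)
    (hγ : c * (∑ i ∈ s, w i * z i) / (∑ i ∈ s, |w i|) ≤ 0) :
    (∑ i ∈ s, w i * (deriv g (δ * ∑ j, |w j| - c * ∑ j, z j * w j)
        * (c * z i - δ * Real.sign (w i)))) / (∑ i ∈ s, |w i|)
      ≤ -δ * deriv g (δ * ∑ j, |w j| - c * ∑ j, z j * w j) ∧
    -δ * deriv g (δ * ∑ j, |w j| - c * ∑ j, z j * w j) ≤ 0 := by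
  set D := deriv g (δ * ∑ j, |w j| - c * ∑ j, z j * w j)
  have hD : 0 ≤ D := hg' _
  rw [Finset.sum_mul_mul_sub_mul_sign_div s w z D c δ hs.ne']
  constructor
  · rw [mul_sub]
    linarith [mul_nonpos_of_nonneg_of_nonpos hD hγ]
  · linarith [mul_nonneg hδ hD]

/-- If `g' ≥ 0` everywhere and the aligned strength is non-positive (`γ_s ≤ 0`), then
`Δ_s ≤ -δ * g' (δ * ∑ j, |w j| - c * ⟨z, w⟩) ≤ 0`: the shrinkage of attributions over
`s` is at least `δ` times the loss derivative. -/
theorem concentration_change_strong_shrinkage (n : ℕ) (g : ℝ → ℝ)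
    (hg : Differentiable ℝ g) (hg' : ∀ t : ℝ, 0 ≤ deriv g t)
    (z w : Fin n → ℝ) (c δ : ℝ) (hδ : 0 ≤ δ)
    (s : Finset (Fin n)) (hs : 0 < ∑ i ∈ s, |w i|)
    (hγ : c * (∑ i ∈ s, w i * z i) / (∑ i ∈ s, |w i|) ≤ 0) :
    (∑ i ∈ s, w i * (deriv g (δ * ∑ j, |w j| - c * ∑ j, z j * w j)
        * (c * z i - δ * Real.sign (w i)))) / (∑ i ∈ s, |w i|)
      ≤ -δ * deriv g (δ * ∑ j, |w j| - c * ∑ j, z j * w j) ∧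
    -δ * deriv g (δ * ∑ j, |w j| - c * ∑ j, z j * w j) ≤ 0 :=
  concentration_change_strong_shrinkage_general n g hg' z w c δ hδ s hs hγ
end

section
/- Let g : ℝ → ℝ be differentiable, nondecreasing, and convex (so g' is nonnegative and nondecreasing), let z, w ∈ ℝ^n, c ∈ ℝ, and let s be a subset of coordinates with Σ_{i ∈ s} |w_i| > 0 and γ_s = c·Σ_{i ∈ s} w_i z_i / Σ_{i ∈ s} |w_i|. For a robustness level δ ≥ 0 write Δ_s(δ) = g'(δ·Σ_j |w_j| - c·⟨z, w⟩)·(γ_s - δ). Then for any δ₁, δ₂ with γ_s ≤ δ₁ ≤ δ₂, one has Δ_s(δ₂) ≤ Δ_s(δ₁) ≤ 0. That is, increasing the robustness level of the trigger makes the shrinkage of the attributions over s at least as strong, concentrating the attributions further. -/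
/-! The map `δ ↦ g' (δ A - B)` is nonnegative (since `g` is monotone) and nondecreasing in `δ`
(since `g` is convex and `A = ∑ |w j| ≥ 0`). Past `γ` the factor `γ - δ` is nonpositive and
decreasing, so the product of a nonnegative nondecreasing factor with a nonpositive
nonincreasing one is nonpositive and nonincreasing. -/

lemma antitoneOn_mul_sub_of_monotone {φ : ℝ → ℝ} (hφ₀ : ∀ x, 0 ≤ φ x) (hφ : Monotone φ)
    (γ : ℝ) : AntitoneOn (fun δ ↦ φ δ * (γ - δ)) (Set.Ici γ) := by
  intro δ₁ hδ₁ δ₂ _ h12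
  calc φ δ₂ * (γ - δ₂) ≤ φ δ₂ * (γ - δ₁) := by gcongr; exact hφ₀ _
    _ ≤ φ δ₁ * (γ - δ₁) := mul_le_mul_of_nonpos_right (hφ h12) (by simpa using hδ₁)

lemma ConvexOn.monotone_deriv_comp_affine {g : ℝ → ℝ} (hg : Differentiable ℝ g)
    (hconv : ConvexOn ℝ Set.univ g) {a : ℝ} (ha : 0 ≤ a) (b : ℝ) :
    Monotone fun δ ↦ deriv g (δ * a - b) := by
  have hderiv : Monotone (deriv g) :=
    monotoneOn_univ.mp (hconv.monotoneOn_deriv fun x _ ↦ hg x)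
  exact hderiv.comp fun δ₁ δ₂ h12 ↦ by gcongr

theorem concentration_change_antitone_in_robustness_general (n : ℕ) (g : ℝ → ℝ)
    (hg : Differentiable ℝ g) (hmono : Monotone g) (hconv : ConvexOn ℝ Set.univ g)
    (z w : Fin n → ℝ) (c : ℝ) (s : Finset (Fin n))
    (δ₁ δ₂ : ℝ) (h12 : δ₁ ≤ δ₂)
    (hγ : c * (∑ i ∈ s, w i * z i) / (∑ i ∈ s, |w i|) ≤ δ₁) :
    deriv g (δ₂ * ∑ j, |w j| - c * ∑ j, z j * w j)
        * (c * (∑ i ∈ s, w i * z i) / (∑ i ∈ s, |w i|) - δ₂)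
      ≤ deriv g (δ₁ * ∑ j, |w j| - c * ∑ j, z j * w j)
        * (c * (∑ i ∈ s, w i * z i) / (∑ i ∈ s, |w i|) - δ₁) ∧
    deriv g (δ₁ * ∑ j, |w j| - c * ∑ j, z j * w j)
        * (c * (∑ i ∈ s, w i * z i) / (∑ i ∈ s, |w i|) - δ₁) ≤ 0 := by
  set γ := c * (∑ i ∈ s, w i * z i) / (∑ i ∈ s, |w i|)
  have hφ₀ (x : ℝ) : 0 ≤ deriv g x := hmono.deriv_nonneg
  have hφ : Monotone fun δ ↦ deriv g (δ * ∑ j, |w j| - c * ∑ j, z j * w j) :=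
    hconv.monotone_deriv_comp_affine hg (Finset.sum_nonneg fun j _ ↦ abs_nonneg (w j)) _
  refine ⟨antitoneOn_mul_sub_of_monotone (fun _ ↦ hφ₀ _) hφ γ hγ (hγ.trans h12) h12, ?_⟩
  exact mul_nonpos_of_nonneg_of_nonpos (hφ₀ _) (sub_nonpos.mpr hγ)

/-- For `g` differentiable, nondecreasing and convex (so `g'` is nonnegative and
nondecreasing), writing `Δ_s δ = g' (δ * ∑ j, |w j| - c * ⟨z, w⟩) * (γ_s - δ)`,
for any `γ_s ≤ δ₁ ≤ δ₂` (with `0 ≤ δ₁`) one has `Δ_s δ₂ ≤ Δ_s δ₁ ≤ 0`: increasing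
the robustness level makes the shrinkage of the attributions at least as strong. -/
theorem concentration_change_antitone_in_robustness (n : ℕ) (g : ℝ → ℝ)
    (hg : Differentiable ℝ g) (hmono : Monotone g) (hconv : ConvexOn ℝ Set.univ g)
    (z w : Fin n → ℝ) (c : ℝ) (s : Finset (Fin n)) (hs : 0 < ∑ i ∈ s, |w i|)
    (δ₁ δ₂ : ℝ) (hδ₁ : 0 ≤ δ₁) (h12 : δ₁ ≤ δ₂)
    (hγ : c * (∑ i ∈ s, w i * z i) / (∑ i ∈ s, |w i|) ≤ δ₁) :
    deriv g (δ₂ * ∑ j, |w j| - c * ∑ j, z j * w j)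
        * (c * (∑ i ∈ s, w i * z i) / (∑ i ∈ s, |w i|) - δ₂)
      ≤ deriv g (δ₁ * ∑ j, |w j| - c * ∑ j, z j * w j)
        * (c * (∑ i ∈ s, w i * z i) / (∑ i ∈ s, |w i|) - δ₁) ∧
    deriv g (δ₁ * ∑ j, |w j| - c * ∑ j, z j * w j)
        * (c * (∑ i ∈ s, w i * z i) / (∑ i ∈ s, |w i|) - δ₁) ≤ 0 :=
  concentration_change_antitone_in_robustness_general n g hg hmono hconv z w c s δ₁ δ₂ h12 hγ
end
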